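/- arXiv:math-ph/0606016 — 4 statements merged into one kernel-verified Lean document; each statement's English description precedes it below -/
import Mathlib

section
/- Let F : ℝ^m → ℝ^l be continuously differentiable and suppose the system F(x) = 0 has maximal rank, i.e., the derivative DF(x) : ℝ^m → ℝ^l is surjective at every point x of the zero set Z = {x : F(x) = 0}. Let w : ℝ^m → ℝ^m be a continuously differentiable vector field with global flow ψ. Then the flow maps the zero set into itself (for all ε ∈ ℝ and all x with F(x) = 0, F(ψ(ε, x)) = 0) if and only if DF(x)(w(x)) = 0 for every x with F(x) = 0. -/
/-!
Necessity: differentiate `F (ψ(ε, x)) = 0` at `ε = 0`.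

Sufficiency: near a zero `a`, maximal rank makes `Φ x = (F x, π x)`, with `π` a projection onto
`ker DF(a)`, a local diffeomorphism straightening the zero set to the slice `{0} × ker DF(a)`.
By tangency, `DΦ(x) (w x) = (0, π (w x))` on the zero set, so integral curves of the `C¹` field
`z ↦ π (w (Φ⁻¹ (0, z)))` on `ker DF(a)` lift through `Φ⁻¹` to integral curves of `w` inside the
zero set. (The full coordinate field involves `DF` and is only continuous, so the lift has to be
built on the slice.) Uniqueness of integral curves of `w` identifies the lift with the flow line
through `a`, and since the zero set is closed, the times a flow line spends in it form a clopen
subset of `ℝ`.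
-/

open Set Filter Topology

theorem ContinuousLinearMap.exists_prod_equiv_of_surjective {𝕜 E G : Type*}
    [NontriviallyNormedField 𝕜] [CompleteSpace 𝕜] [NormedAddCommGroup E] [NormedSpace 𝕜 E]
    [CompleteSpace E] [NormedAddCommGroup G] [NormedSpace 𝕜 G] [FiniteDimensional 𝕜 G]
    (f : E →L[𝕜] G) (hf : Function.Surjective f) :
    ∃ (π : E →L[𝕜] f.ker) (e : E ≃L[𝕜] G × f.ker), (e : E →L[𝕜] G × f.ker) = f.prod π := by
  have : CompleteSpace G := FiniteDimensional.complete 𝕜 G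
  obtain ⟨π, hπ⟩ := f.ker_closedComplemented_of_finiteDimensional_range
  exact ⟨π, f.equivProdOfSurjectiveOfIsCompl π (LinearMap.range_eq_top.2 hf)
    (LinearMap.range_eq_of_proj hπ) (LinearMap.isCompl_of_proj hπ), rfl⟩

variable {E G K : Type*} [NormedAddCommGroup E] [NormedSpace ℝ E]
  [NormedAddCommGroup G] [NormedSpace ℝ G] [NormedAddCommGroup K] [NormedSpace ℝ K]

theorem fderiv_apply_eq_zero_of_eventually_comp_eq {F : E → G} {γ : ℝ → E} {t₀ : ℝ} {v : E}
    {c : G} (hF : DifferentiableAt ℝ F (γ t₀)) (hγ : HasDerivAt γ v t₀)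
    (hc : ∀ᶠ t in 𝓝 t₀, F (γ t) = c) : fderiv ℝ F (γ t₀) v = 0 :=
  (hF.hasFDerivAt.comp_hasDerivAt t₀ hγ).unique ((hasDerivAt_const t₀ c).congr_of_eventuallyEq hc)

theorem hasDerivAt_comp_of_eventually_leftInverse {H : Type*} [NormedAddCommGroup H]
    [NormedSpace ℝ H] {Φ : E → H} {Φ' : E →L[ℝ] H} {Ψ : H → E} {y : ℝ → H} {y' : H} {t : ℝ}
    {v : E} (hy : HasDerivAt y y' t) (hΨ : DifferentiableAt ℝ Ψ (y t))
    (hΦ : HasFDerivAt Φ Φ' (Ψ (y t))) (hΦΨ : Φ (Ψ (y t)) = y t)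
    (hΨΦ : ∀ᶠ x in 𝓝 (Ψ (y t)), Ψ (Φ x) = x) (hv : Φ' v = y') :
    HasDerivAt (fun s => Ψ (y s)) v t := by
  have hΨ' : HasFDerivAt Ψ (fderiv ℝ Ψ (y t)) (Φ (Ψ (y t))) := by
    rw [hΦΨ]; exact hΨ.hasFDerivAt
  have hid : (fderiv ℝ Ψ (y t)).comp Φ' = ContinuousLinearMap.id ℝ E :=
    (hΨ'.comp _ hΦ).unique ((hasFDerivAt_id _).congr_of_eventuallyEq hΨΦ)
  have hv' : fderiv ℝ Ψ (y t) y' = v := by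
    rw [← hv, ← ContinuousLinearMap.comp_apply, hid, ContinuousLinearMap.id_apply]
  exact hv' ▸ hΨ.hasFDerivAt.comp_hasDerivAt t hy

theorem exists_integralCurve_within_zeroSet [CompleteSpace E] [CompleteSpace K] {F : E → G}
    (hF : ContDiff ℝ 1 F) {w : E → E} (hw : ContDiff ℝ 1 w)
    (htangent : ∀ x, F x = 0 → fderiv ℝ F x (w x) = 0) {a : E} (ha : F a = 0)
    {π : E →L[ℝ] K} {e : E ≃L[ℝ] G × K} (he : (e : E →L[ℝ] G × K) = (fderiv ℝ F a).prod π) :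
    ∃ c : ℝ → E, c 0 = a ∧ ∀ᶠ t in 𝓝 0, F (c t) = 0 ∧ HasDerivAt c (w (c t)) t := by
  set Φ : E → G × K := fun x => (F x, π x)
  have hΦ' : ∀ x, HasFDerivAt Φ ((fderiv ℝ F x).prod π) x := fun x =>
    (hF.differentiable one_ne_zero x).hasFDerivAt.prodMk π.hasFDerivAt
  have hΦ : ContDiffAt ℝ 1 Φ a := (hF.prodMk π.contDiff).contDiffAt
  have hΦa : HasFDerivAt Φ (e : E →L[ℝ] G × K) a := he ▸ hΦ' a
  set Ψ := hΦ.localInverse hΦa one_ne_zero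
  have hΦa0 : Φ a = (0, π a) := by simp [Φ, ha]
  have hΨ : ContDiffAt ℝ 1 Ψ (0, π a) := hΦa0 ▸ hΦ.to_localInverse hΦa one_ne_zero
  have hΨa : Ψ (0, π a) = a := hΦa0 ▸ hΦ.localInverse_apply_image hΦa one_ne_zero
  have hstrict := hΦ.hasStrictFDerivAt' hΦa one_ne_zero
  have hΨΦ : ∀ᶠ x in 𝓝 a, Ψ (Φ x) = x := hstrict.eventually_left_inverse
  have hΦΨ : ∀ᶠ p in 𝓝 (0, π a), Φ (Ψ p) = p := hΦa0 ▸ hstrict.eventually_right_inverse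
  set v : K → K := fun z => π (w (Ψ (0, z)))
  have hv : ContDiffAt ℝ 1 v (π a) := by
    have hslice : ContDiffAt ℝ 1 (fun z : K => Ψ (0, z)) (π a) :=
      hΨ.comp (π a) (contDiff_const.prodMk contDiff_id).contDiffAt
    exact π.contDiff.contDiffAt.comp (π a) (hw.contDiffAt.comp (π a) hslice)
  obtain ⟨u, hu0, ε, hε, hu⟩ := hv.exists_forall_mem_closedBall_exists_eq_forall_mem_Ioo_hasDerivAt₀ 0
  have hu' : ∀ᶠ t in 𝓝 0, HasDerivAt u (v (u t)) t :=
    eventually_of_mem (Ioo_mem_nhds (by linarith) (by linarith)) hu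
  have hy : Tendsto (fun t => ((0 : G), u t)) (𝓝 0) (𝓝 (0, π a)) :=
    hu0 ▸ tendsto_const_nhds.prodMk_nhds hu'.self_of_nhds.continuousAt.tendsto
  have hc : Tendsto (fun t => Ψ (0, u t)) (𝓝 0) (𝓝 a) := hΨa ▸ hΨ.continuousAt.tendsto.comp hy
  refine ⟨fun t => Ψ (0, u t), by simp only [hu0, hΨa], ?_⟩
  filter_upwards [hu', hy.eventually hΦΨ, hy.eventually (hΨ.eventually (by simp)),
    hc.eventually (eventually_eventually_nhds.2 hΨΦ)] with t hut hΦΨt hΨt hΨΦt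
  have hFt : F (Ψ (0, u t)) = 0 := congrArg Prod.fst hΦΨt
  refine ⟨hFt, hasDerivAt_comp_of_eventually_leftInverse ((hasDerivAt_const t 0).prodMk hut)
    (hΨt.differentiableAt one_ne_zero) (hΦ' _) hΦΨt hΨΦt ?_⟩
  simp [htangent _ hFt, v]

theorem eventually_eq_zero_of_integralCurve [CompleteSpace E] [FiniteDimensional ℝ G]
    {F : E → G} (hF : ContDiff ℝ 1 F) {w : E → E} (hw : ContDiff ℝ 1 w)
    (htangent : ∀ x, F x = 0 → fderiv ℝ F x (w x) = 0) {a : E} (ha : F a = 0)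
    (hsurj : Function.Surjective (fderiv ℝ F a)) {γ : ℝ → E} (hγ0 : γ 0 = a)
    (hγ : ∀ᶠ t in 𝓝 0, HasDerivAt γ (w (γ t)) t) : ∀ᶠ t in 𝓝 0, F (γ t) = 0 := by
  obtain ⟨π, e, he⟩ := (fderiv ℝ F a).exists_prod_equiv_of_surjective hsurj
  obtain ⟨c, hc0, hc⟩ := exists_integralCurve_within_zeroSet hF hw htangent ha he
  obtain ⟨L, s, hs, hL⟩ := hw.contDiffAt.exists_lipschitzOnWith (x := a)
  have hcs : ∀ᶠ t in 𝓝 0, c t ∈ s :=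
    hc.self_of_nhds.2.continuousAt.tendsto.eventually (hc0 ▸ hs)
  have hγs : ∀ᶠ t in 𝓝 0, γ t ∈ s :=
    hγ.self_of_nhds.continuousAt.tendsto.eventually (hγ0 ▸ hs)
  have hcγ : c =ᶠ[𝓝 0] γ :=
    ODE_solution_unique_of_eventually (v := fun _ => w) (s := fun _ => s) (.of_forall fun _ => hL)
      ((hc.and hcs).mono fun _ h => ⟨h.1.2, h.2⟩) (hγ.and hγs) (hc0.trans hγ0.symm)
  filter_upwards [hcγ, hc] with t hct hct'
  exact hct ▸ hct'.1

theorem IsClosed.mapsTo_flow_of_eventually {X : Type*} [TopologicalSpace X] {Z : Set X}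
    (hZ : IsClosed Z) {ψ : ℝ → X → X} (hψ0 : ∀ x, ψ 0 x = x)
    (hψadd : ∀ s t x, ψ (s + t) x = ψ s (ψ t x)) (hψcont : ∀ x, Continuous fun t => ψ t x)
    (hloc : ∀ x ∈ Z, ∀ᶠ t in 𝓝 0, ψ t x ∈ Z) (t : ℝ) : MapsTo (ψ t) Z Z := by
  intro x hx
  have hS : IsClopen {t | ψ t x ∈ Z} := by
    refine ⟨hZ.preimage (hψcont x), isOpen_iff_mem_nhds.2 fun t₀ ht₀ => ?_⟩
    filter_upwards [(tendsto_sub_nhds_zero_iff.2 tendsto_id).eventually (hloc _ ht₀)] with t ht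
    rwa [← hψadd, sub_add_cancel] at ht
  exact eq_univ_iff_forall.1 (hS.eq_univ ⟨0, show ψ 0 x ∈ Z by rwa [hψ0]⟩) t

/-- For a C¹ map `F` of maximal rank on its zero set and a C¹ vector
field `w` with global flow `ψ`, the flow preserves the zero set of `F` iff
`DF(x)(w(x)) = 0` on the zero set. -/
theorem symmetry_group_of_algebraic_system
    {m l : ℕ} (F : (Fin m → ℝ) → (Fin l → ℝ)) (hF : ContDiff ℝ 1 F)
    (hrank : ∀ x : Fin m → ℝ, F x = 0 → Function.Surjective (fderiv ℝ F x))
    (w : (Fin m → ℝ) → (Fin m → ℝ)) (hw : ContDiff ℝ 1 w)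
    (ψ : ℝ → (Fin m → ℝ) → (Fin m → ℝ))
    (hψ0 : ∀ x, ψ 0 x = x)
    (hψadd : ∀ s t x, ψ (s + t) x = ψ s (ψ t x))
    (hψflow : ∀ x t, HasDerivAt (fun s => ψ s x) (w (ψ t x)) t) :
    (∀ (ε : ℝ) (x : Fin m → ℝ), F x = 0 → F (ψ ε x) = 0) ↔
      ∀ x : Fin m → ℝ, F x = 0 → fderiv ℝ F x (w x) = 0 := by
  constructor
  · intro hinv x hx
    have hγ : HasDerivAt (fun s => ψ s x) (w x) 0 := by simpa only [hψ0] using hψflow x 0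
    simpa only [hψ0] using fderiv_apply_eq_zero_of_eventually_comp_eq
      (by rw [hψ0]; exact hF.differentiable one_ne_zero x) hγ (.of_forall fun ε => hinv ε x hx)
  · intro htangent ε x hx
    have hZ : IsClosed {x | F x = 0} := isClosed_eq hF.continuous continuous_const
    exact hZ.mapsTo_flow_of_eventually hψ0 hψadd
      (fun x => continuous_iff_continuousAt.2 fun t => (hψflow x t).continuousAt)
      (fun a ha => eventually_eq_zero_of_integralCurve hF hw htangent ha (hrank a ha) (hψ0 a)
        (.of_forall (hψflow a))) ε hx
end

section
/- Let v, w : ℝ^m → ℝ^m be continuously differentiable vector fields whose Lie bracket vanishes identically, [v, w](x) = 0 for all x. Let ψ be a global flow of w such that ψ(ε, ·) is continuously differentiable in the space variable for each ε. Then the flow of w preserves the vector field v: for all ε ∈ ℝ and x ∈ ℝ^m, D_x ψ(ε, x)(v(x)) = v(ψ(ε, x)), where D_x ψ(ε, x) is the derivative of the map y ↦ ψ(ε, y) at x. -/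
/-!
The derivative of the time-`T` map of the flow transports solutions of the variational equation
`g' = Dw(ψ t x) g` along the trajectory of `x`: comparing `ψ t (x + s • g 0)` with
`ψ t x + s • g t` by Grönwall's inequality shows that `s ↦ ψ T (x + s • g 0)` has right
derivative `g T` at `0`. Since `[v, w] = 0`, `g t = v (ψ t x)` solves the variational equation,
which gives the claim for `T ≥ 0`; negative times follow by differentiating `ψ T ∘ ψ (-T) = id`.
-/

open Set Filter Topology Real

variable {E F : Type*} [NormedAddCommGroup E] [NormedSpace ℝ E]
  [NormedAddCommGroup F] [NormedSpace ℝ F]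

theorem IsCompact.exists_forall_norm_sub_sub_fderiv_le {f : E → F} (hf : ContDiff ℝ 1 f)
    {K : Set E} (hK : IsCompact K) {ρ : ℝ} (hρ : 0 < ρ) :
    ∃ δ > 0, ∀ a ∈ K, ∀ b, ‖b - a‖ < δ →
      ‖f b - f a - fderiv ℝ f a (b - a)‖ ≤ ρ * ‖b - a‖ := by
  obtain ⟨δ, hδ, hclose⟩ := Metric.mem_uniformity_dist.1 <|
    hK.uniformContinuousAt_of_continuousAt (fderiv ℝ f)
      (fun _ _ => (hf.continuous_fderiv one_ne_zero).continuousAt) (Metric.dist_mem_uniformity hρ)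
  refine ⟨δ, hδ, fun a ha b hb => ?_⟩
  refine (convex_ball a δ).norm_image_sub_le_of_norm_fderiv_le'
    (fun z _ => hf.differentiable one_ne_zero z) (fun z hz => ?_) (Metric.mem_ball_self hδ)
    (mem_ball_iff_norm.2 hb)
  rw [← dist_eq_norm, dist_comm]
  exact (hclose (Metric.mem_ball'.1 hz) ha).le

theorem IsCompact.exists_forall_norm_sub_le_mul {f : E → F} (hf : ContDiff ℝ 1 f) {K : Set E}
    (hK : IsCompact K) :
    ∃ L ≥ 0, ∃ δ > 0, ∀ a ∈ K, ∀ b, ‖b - a‖ < δ → ‖f b - f a‖ ≤ L * ‖b - a‖ := by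
  obtain ⟨C, hC⟩ := hK.exists_bound_of_continuousOn (hf.continuous_fderiv one_ne_zero).continuousOn
  obtain ⟨δ, hδ, htaylor⟩ := hK.exists_forall_norm_sub_sub_fderiv_le hf one_pos
  refine ⟨max C 0 + 1, by positivity, δ, hδ, fun a ha b hb => ?_⟩
  calc ‖f b - f a‖ ≤ ‖fderiv ℝ f a (b - a)‖ + ‖f b - f a - fderiv ℝ f a (b - a)‖ :=
        norm_le_norm_add_norm_sub' _ _
    _ ≤ max C 0 * ‖b - a‖ + 1 * ‖b - a‖ := by
        gcongr
        · exact (fderiv ℝ f a).le_of_opNorm_le ((hC a ha).trans (le_max_left _ _)) _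
        · exact htaylor a ha b hb
    _ = (max C 0 + 1) * ‖b - a‖ := by ring

theorem gronwallBound_zero_le {K ε x : ℝ} (hK : 0 ≤ K) (hε : 0 ≤ ε) :
    gronwallBound 0 K ε x ≤ ε * x * exp (K * x) := by
  rcases hK.eq_or_lt with rfl | hK
  · simp [gronwallBound_K0]
  simp only [gronwallBound_of_K_ne_0 hK.ne', zero_mul, zero_add]
  rw [div_mul_eq_mul_div, div_le_iff₀ hK]
  -- `exp (K x) - 1 ≤ K x exp (K x)` is `1 - K x ≤ exp (-K x)` multiplied by `exp (K x)`.
  have h := add_one_le_exp (-(K * x))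
  rw [exp_neg] at h
  have := exp_pos (K * x)
  field_simp at h
  nlinarith

-- Continuous induction: while `γ` stays in the `δ`-tube around `c`, Grönwall's inequality keeps it
-- at distance `≤ ‖γ a - c a‖ * exp (L * (b - a)) < δ`, so it cannot reach the boundary of the tube.
theorem norm_sub_le_of_trajectories_of_lipschitz_near {w : E → E} {c γ : ℝ → E} {L δ a b : ℝ}
    (hc : ∀ t, HasDerivAt c (w (c t)) t) (hγ : ∀ t, HasDerivAt γ (w (γ t)) t)
    (hw : ∀ t ∈ Icc a b, ∀ z, ‖z - c t‖ < δ → ‖w z - w (c t)‖ ≤ L * ‖z - c t‖)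
    (hL : 0 ≤ L) (hδ : ‖γ a - c a‖ * exp (L * (b - a)) < δ) :
    ∀ t ∈ Icc a b, ‖γ t - c t‖ ≤ ‖γ a - c a‖ * exp (L * (t - a)) := by
  set D := ‖γ a - c a‖
  have hcont : Continuous fun t => γ t - c t :=
    continuous_iff_continuousAt.2 fun t => ((hγ t).sub (hc t)).continuousAt
  let S := {t | ‖γ t - c t‖ ≤ D * exp (L * (t - a))}
  have hS : IsClosed S := isClosed_le hcont.norm (by fun_prop)
  refine (hS.inter isClosed_Icc).Icc_subset_of_forall_mem_nhdsGT_of_Icc_subset (by simp [S, D])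
    fun t ht hat => ?_
  have hsmall : ∀ u ∈ Icc a t, ‖γ u - c u‖ < δ := fun u hu =>
    calc ‖γ u - c u‖ ≤ D * exp (L * (u - a)) := hat hu
      _ ≤ D * exp (L * (b - a)) := by gcongr; linarith [hu.2, ht.2]
      _ < δ := hδ
  obtain ⟨t₁, htt₁, hnear⟩ := mem_nhdsGE_iff_exists_Icc_subset.1 <| mem_nhdsWithin_of_mem_nhds <|
    hcont.norm.continuousAt.eventually (gt_mem_nhds (hsmall t ⟨ht.1, le_rfl⟩))
  set t' := min t₁ b
  have hgron : Icc a t' ⊆ S := by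
    intro u hu
    refine (norm_le_gronwallBound_of_norm_deriv_right_le hcont.continuousOn
      (fun u _ => ((hγ u).sub (hc u)).hasDerivWithinAt) le_rfl (fun u hu' => ?_) u hu).trans_eq
      (by rw [gronwallBound_ε0])
    rw [add_zero]
    refine hw u ⟨hu'.1, hu'.2.le.trans (min_le_right _ _)⟩ _ ?_
    rcases le_total u t with hut | htu
    · exact hsmall u ⟨hu'.1, hut⟩
    · exact hnear ⟨htu, hu'.2.le.trans (min_le_left _ _)⟩
  exact mem_of_superset (Ioo_mem_nhdsGT (lt_min htt₁ ht.2)) fun u hu =>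
    hgron ⟨ht.1.trans hu.1.le, hu.2.le⟩

theorem exists_forall_norm_flow_sub_le {w : E → E} (hw : ContDiff ℝ 1 w) {ψ : ℝ → E → E}
    (hψ0 : ∀ y, ψ 0 y = y) (hψ : ∀ y t, HasDerivAt (fun s => ψ s y) (w (ψ t y)) t)
    (x : E) (T : ℝ) :
    ∃ L, ∃ δ > 0, ∀ y, ‖y - x‖ * exp (L * T) < δ →
      ∀ t ∈ Icc 0 T, ‖ψ t y - ψ t x‖ ≤ ‖y - x‖ * exp (L * T) := by
  have hc : Continuous fun t => ψ t x :=
    continuous_iff_continuousAt.2 fun t => (hψ x t).continuousAt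
  obtain ⟨L, hL, δ, hδ, hlip⟩ := (isCompact_Icc.image hc).exists_forall_norm_sub_le_mul hw
  refine ⟨L, δ, hδ, fun y hy t ht => ?_⟩
  have hclose := norm_sub_le_of_trajectories_of_lipschitz_near (hψ x) (hψ y)
    (fun t ht z hz => hlip _ (mem_image_of_mem _ ht) z hz) hL (by simpa [hψ0] using hy) t ht
  simp only [hψ0, sub_zero] at hclose
  exact hclose.trans (by gcongr; exact ht.2)

theorem norm_sub_sub_le_of_hasDerivAt_linearization {w : E → E} {A : ℝ → E →L[ℝ] E}
    {c γ h : ℝ → E} {C η T : ℝ}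
    (hc : ∀ t, HasDerivAt c (w (c t)) t) (hγ : ∀ t, HasDerivAt γ (w (γ t)) t)
    (hh : ∀ t, HasDerivAt h (A t (h t)) t) (h0 : γ 0 - c 0 = h 0)
    (hA : ∀ t ∈ Icc 0 T, ‖A t‖ ≤ C)
    (hrem : ∀ t ∈ Icc 0 T, ‖w (γ t) - w (c t) - A t (γ t - c t)‖ ≤ η) (hT : 0 ≤ T) :
    ‖γ T - c T - h T‖ ≤ η * T * exp (C * T) := by
  have hT0 : (0 : ℝ) ∈ Icc 0 T := ⟨le_rfl, hT⟩
  have hderiv : ∀ t, HasDerivAt (fun t => γ t - c t - h t)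
      (A t (γ t - c t - h t) + (w (γ t) - w (c t) - A t (γ t - c t))) t := fun t =>
    (((hγ t).sub (hc t)).sub (hh t)).congr_deriv (by rw [map_sub (A t) _ (h t)]; abel)
  have hgron := norm_le_gronwallBound_of_norm_deriv_right_le (δ := 0) (K := C) (ε := η)
    (HasDerivAt.continuousOn fun t _ => hderiv t) (fun t _ => (hderiv t).hasDerivWithinAt)
    (by simp [h0]) (fun t ht => (norm_add_le _ _).trans <| add_le_add
      ((A t).le_of_opNorm_le (hA t (Ico_subset_Icc_self ht)) _) (hrem t (Ico_subset_Icc_self ht)))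
    T ⟨hT, le_rfl⟩
  rw [sub_zero] at hgron
  exact hgron.trans <| gronwallBound_zero_le ((norm_nonneg _).trans (hA 0 hT0))
    ((norm_nonneg _).trans (hrem 0 hT0))

theorem hasDerivWithinAt_flow_of_hasDerivAt_variational {w : E → E} (hw : ContDiff ℝ 1 w)
    {ψ : ℝ → E → E} (hψ0 : ∀ y, ψ 0 y = y) (hψ : ∀ y t, HasDerivAt (fun s => ψ s y) (w (ψ t y)) t)
    {x : E} {g : ℝ → E} (hg : ∀ t, HasDerivAt g (fderiv ℝ w (ψ t x) (g t)) t)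
    {T : ℝ} (hT : 0 ≤ T) :
    HasDerivWithinAt (fun s : ℝ => ψ T (x + s • g 0)) (g T) (Ici 0) 0 := by
  set c := fun t => ψ t x
  have hc : Continuous c := continuous_iff_continuousAt.2 fun t => (hψ x t).continuousAt
  obtain ⟨C, hC⟩ := (isCompact_Icc : IsCompact (Icc 0 T)).exists_bound_of_continuousOn
    ((hw.continuous_fderiv one_ne_zero).comp hc).continuousOn
  obtain ⟨L, δ₀, hδ₀, htube⟩ := exists_forall_norm_flow_sub_le hw hψ0 hψ x T
  set M := ‖g 0‖ * exp (L * T)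
  rw [hasDerivWithinAt_iff_isLittleO, Asymptotics.isLittleO_iff]
  intro θ hθ
  -- `ρ` is chosen so that the linearization error `ρ * (s * M) * T * exp (C * T)` is `≤ θ * s`.
  set ρ := θ / (M * T * exp (C * T) + 1)
  have hρ : 0 < ρ := by positivity
  obtain ⟨δ₁, hδ₁, htaylor⟩ :=
    (isCompact_Icc.image hc).exists_forall_norm_sub_sub_fderiv_le hw hρ
  have hsmall : ∀ᶠ s in 𝓝[≥] 0, s * M < min δ₀ δ₁ := eventually_nhdsWithin_of_eventually_nhds <|
    ((continuous_id.mul continuous_const).tendsto' 0 0 (zero_mul M)).eventually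
      (gt_mem_nhds (lt_min hδ₀ hδ₁))
  filter_upwards [hsmall, self_mem_nhdsWithin] with s hsM (hs : 0 ≤ s)
  set γ := fun t => ψ t (x + s • g 0)
  have hM : ‖x + s • g 0 - x‖ * exp (L * T) = s * M := by
    rw [add_sub_cancel_left, norm_smul, Real.norm_of_nonneg hs, mul_assoc]
  have hnear : ∀ t ∈ Icc 0 T, ‖γ t - c t‖ ≤ s * M := fun t ht =>
    hM ▸ htube _ (hM ▸ hsM.trans_le (min_le_left _ _)) t ht
  have hrem : ∀ t ∈ Icc 0 T,
      ‖w (γ t) - w (c t) - fderiv ℝ w (c t) (γ t - c t)‖ ≤ ρ * (s * M) := fun t ht =>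
    (htaylor (c t) (mem_image_of_mem c ht) (γ t)
      ((hnear t ht).trans_lt (hsM.trans_le (min_le_right _ _)))).trans
      (mul_le_mul_of_nonneg_left (hnear t ht) hρ.le)
  have hlin := norm_sub_sub_le_of_hasDerivAt_linearization (hψ x) (hψ _)
    (fun t => ((hg t).const_smul s).congr_deriv (map_smul _ _ _).symm) (by simp [hψ0])
    hC hrem hT
  calc ‖ψ T (x + s • g 0) - ψ T (x + (0 : ℝ) • g 0) - (s - 0) • g T‖
      = ‖γ T - c T - s • g T‖ := by simp [γ, c]
    _ ≤ ρ * (s * M) * T * exp (C * T) := hlin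
    _ = s * (ρ * (M * T * exp (C * T))) := by ring
    _ ≤ s * θ := by
      gcongr
      rw [div_mul_eq_mul_div, div_le_iff₀ (by positivity)]
      nlinarith
    _ = θ * ‖s - 0‖ := by rw [sub_zero, Real.norm_of_nonneg hs, mul_comm]

theorem HasFDerivAt.flow_apply_eq_of_hasDerivAt_variational {w : E → E} (hw : ContDiff ℝ 1 w)
    {ψ : ℝ → E → E} (hψ0 : ∀ y, ψ 0 y = y) (hψ : ∀ y t, HasDerivAt (fun s => ψ s y) (w (ψ t y)) t)
    {x : E} {g : ℝ → E} (hg : ∀ t, HasDerivAt g (fderiv ℝ w (ψ t x) (g t)) t)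
    {T : ℝ} (hT : 0 ≤ T) {A : E →L[ℝ] E} (hA : HasFDerivAt (ψ T) A x) :
    A (g 0) = g T := by
  have hline : HasDerivAt (fun s : ℝ => ψ T (x + s • g 0)) (A (g 0)) 0 := by
    simpa [Function.comp_def] using hA.comp_hasDerivAt_of_eq (x := 0)
      (((hasDerivAt_id (0 : ℝ)).smul_const (g 0)).const_add x) (by simp)
  exact (uniqueDiffWithinAt_Ici 0).eq_deriv _ hline.hasDerivWithinAt
    (hasDerivWithinAt_flow_of_hasDerivAt_variational hw hψ0 hψ hg hT)

theorem HasDerivAt.vectorField_comp_of_lieBracket_eq_zero {v w : E → E} {c : ℝ → E} {t : ℝ}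
    (hc : HasDerivAt c (w (c t)) t) (hv : DifferentiableAt ℝ v (c t))
    (hvw : VectorField.lieBracket ℝ v w (c t) = 0) :
    HasDerivAt (fun s => v (c s)) (fderiv ℝ w (c t) (v (c t))) t :=
  (hv.hasFDerivAt.comp_hasDerivAt t hc).congr_deriv (sub_eq_zero.1 hvw).symm

theorem fderiv_apply_eq_of_fderiv_neg_apply_eq {ψ : ℝ → E → E} {v : E → E}
    (hψ0 : ∀ x, ψ 0 x = x) (hψadd : ∀ s t x, ψ (s + t) x = ψ s (ψ t x))
    (hψd : ∀ t, Differentiable ℝ (ψ t)) {t : ℝ}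
    (h : ∀ y, fderiv ℝ (ψ (-t)) y (v y) = v (ψ (-t) y)) (x : E) :
    fderiv ℝ (ψ t) x (v x) = v (ψ t x) := by
  set z := ψ t x
  have hz : ψ (-t) z = x := by rw [← hψadd, neg_add_cancel, hψ0]
  have hinv : ψ t ∘ ψ (-t) = id := funext fun y => by
    rw [Function.comp_apply, ← hψadd, add_neg_cancel, hψ0, id]
  have hchain := fderiv_comp z (hψd t (ψ (-t) z)) (hψd (-t) z)
  rw [hinv, fderiv_id, hz] at hchain
  calc fderiv ℝ (ψ t) x (v x) = fderiv ℝ (ψ t) x (fderiv ℝ (ψ (-t)) z (v z)) := by rw [h z, hz]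
    _ = v z := by rw [← ContinuousLinearMap.comp_apply, ← hchain, ContinuousLinearMap.id_apply]

/-- If `[v, w] = 0` then the flow of `w` preserves the vector field `v`:
`D_x ψ(ε, x)(v(x)) = v(ψ(ε, x))`. -/
theorem commuting_flow_preserves_field
    {m : ℕ} (v w : (Fin m → ℝ) → (Fin m → ℝ))
    (hv : ContDiff ℝ 1 v) (hw : ContDiff ℝ 1 w)
    (hbracket : ∀ x : Fin m → ℝ, fderiv ℝ w x (v x) - fderiv ℝ v x (w x) = 0)
    (ψ : ℝ → (Fin m → ℝ) → (Fin m → ℝ))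
    (hψ0 : ∀ x, ψ 0 x = x)
    (hψadd : ∀ s t x, ψ (s + t) x = ψ s (ψ t x))
    (hψflow : ∀ x t, HasDerivAt (fun s => ψ s x) (w (ψ t x)) t)
    (hψsmooth : ∀ ε : ℝ, ContDiff ℝ 1 (ψ ε)) :
    ∀ (ε : ℝ) (x : Fin m → ℝ), fderiv ℝ (ψ ε) x (v x) = v (ψ ε x) := by
  have hψd : ∀ t, Differentiable ℝ (ψ t) := fun t => (hψsmooth t).differentiable one_ne_zero
  have hnonneg : ∀ ε, 0 ≤ ε → ∀ x, fderiv ℝ (ψ ε) x (v x) = v (ψ ε x) := fun ε hε x => by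
    simpa [hψ0] using (hψd ε x).hasFDerivAt.flow_apply_eq_of_hasDerivAt_variational hw hψ0 hψflow
      (fun t => (hψflow x t).vectorField_comp_of_lieBracket_eq_zero
        (hv.differentiable one_ne_zero _) (hbracket _)) hε
  intro ε x
  rcases le_total 0 ε with hε | hε
  · exact hnonneg ε hε x
  · exact fderiv_apply_eq_of_fderiv_neg_apply_eq hψ0 hψadd hψd (hnonneg (-ε) (neg_nonneg.2 hε)) x
end

section
/- Let v, w : ℝ^m → ℝ^m be continuously differentiable vector fields with vanishing Lie bracket, [v, w](x) = 0 for all x, and let ψ be a global flow of w such that ψ(ε, ·) is continuously differentiable in the space variable for each ε. Then the flow of w is a symmetry group of the autonomous ordinary differential equation ẋ = v(x): for every ε ∈ ℝ and every differentiable solution γ : ℝ → ℝ^m of γ'(t) = v(γ(t)), the transformed curve t ↦ ψ(ε, γ(t)) is again a solution of the same equation. -/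
/-!
Write `u s = Dψₛ(y) (v y)` and `z s = v (ψₛ y)`. Both start at `v y`, and both solve the linear
equation `ξ' = Dw(ψₛ y) ξ`: for `z` this is the chain rule together with `[v, w] = 0`, for `u`
it follows from the group law once one knows that `s ↦ Dψₛ(p)` has derivative `Dw(p)` at
`s = 0`. Since `ψ` is only assumed `C¹` in space, that derivative is obtained by showing, with
Grönwall's inequality and the mean value inequality, that `ψₛ - id - s • w` is Lipschitz near `p`
with constant `o(s)`. Uniqueness for the linear equation gives `Dψₑ(y) (v y) = v (ψₑ y)`, which
is the derivative of `ψₑ ∘ γ` by the chain rule.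
-/

open Metric Set Real
open scoped Topology NNReal

section

variable {E : Type*} [NormedAddCommGroup E] [NormedSpace ℝ E] {w : E → E} {ψ : ℝ → E → E}
  {p q q₁ q₂ : E} {r C t : ℝ}

theorem flow_mem_closedBall (hψ0 : ∀ x, ψ 0 x = x)
    (hψflow : ∀ x t, HasDerivAt (fun s => ψ s x) (w (ψ t x)) t)
    (hC : ∀ x ∈ closedBall p r, ‖w x‖ < C) (hq : q ∈ closedBall p (r / 2))
    (hCt : C * t ≤ r / 2) : ∀ s ∈ Icc 0 t, ψ s q ∈ closedBall p r := by
  have hr : 0 ≤ r := by linarith [nonempty_closedBall.1 ⟨q, hq⟩]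
  have hC0 : 0 ≤ C := (norm_nonneg _).trans (hC p (mem_closedBall_self hr)).le
  have near_q : ∀ x, ‖x - q‖ ≤ r / 2 → x ∈ closedBall p r := fun x hx => by
    rw [mem_closedBall, dist_eq_norm]
    have := mem_closedBall_iff_norm.1 hq
    calc ‖x - p‖ = ‖(x - q) + (q - p)‖ := by abel_nf
      _ ≤ r := (norm_add_le _ _).trans (by linarith)
  have hCs : ∀ s ≤ t, C * s ≤ r / 2 := fun s hs => (mul_le_mul_of_nonneg_left hs hC0).trans hCt
  intro s hs
  refine near_q _ ((image_norm_le_of_norm_deriv_right_lt_deriv_boundary (a := 0) (b := t)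
    (f := fun s => ψ s q - q) (f' := fun s => w (ψ s q)) (B := fun s => C * s) (B' := fun _ => C)
    (fun s _ => ((hψflow q s).sub_const q).continuousAt.continuousWithinAt)
    (fun s _ => ((hψflow q s).sub_const q).hasDerivWithinAt) (by simp [hψ0])
    (fun s => by simpa using (hasDerivAt_id s).const_mul C)
    (fun s hs hsq => hC _ (near_q _ (hsq.trans_le (hCs s hs.2.le)))) hs).trans (hCs s hs.2))

theorem dist_flow_le_mul_exp (hψ0 : ∀ x, ψ 0 x = x)
    (hψflow : ∀ x t, HasDerivAt (fun s => ψ s x) (w (ψ t x)) t)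
    (hC : ∀ x ∈ closedBall p r, ‖w x‖ < C) {K : ℝ≥0} (hK : LipschitzOnWith K w (closedBall p r))
    (h₁ : q₁ ∈ closedBall p (r / 2)) (h₂ : q₂ ∈ closedBall p (r / 2)) (hCt : C * t ≤ r / 2) :
    ∀ s ∈ Icc 0 t, dist (ψ s q₁) (ψ s q₂) ≤ dist q₁ q₂ * exp (K * s) := by
  have mem {q} (hq : q ∈ closedBall p (r / 2)) (s : ℝ) (hs : s ∈ Ico 0 t) :=
    flow_mem_closedBall hψ0 hψflow hC hq hCt s (Ico_subset_Icc_self hs)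
  simpa [hψ0] using dist_le_of_trajectories_ODE_of_mem (v := fun _ => w)
    (s := fun _ => closedBall p r) (fun _ _ => hK)
    (fun s _ => (hψflow q₁ s).continuousAt.continuousWithinAt)
    (fun s _ => (hψflow q₁ s).hasDerivWithinAt) (mem h₁)
    (fun s _ => (hψflow q₂ s).continuousAt.continuousWithinAt)
    (fun s _ => (hψflow q₂ s).hasDerivWithinAt) (mem h₂) le_rfl

theorem norm_flow_sub_flow_sub_sub_le (hψ0 : ∀ x, ψ 0 x = x)
    (hψflow : ∀ x t, HasDerivAt (fun s => ψ s x) (w (ψ t x)) t)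
    (hC : ∀ x ∈ closedBall p r, ‖w x‖ < C) {K : ℝ≥0} (hK : LipschitzOnWith K w (closedBall p r))
    (h₁ : q₁ ∈ closedBall p (r / 2)) (h₂ : q₂ ∈ closedBall p (r / 2)) (hCt : C * t ≤ r / 2) :
    ∀ s ∈ Icc 0 t, ‖ψ s q₁ - ψ s q₂ - (q₁ - q₂)‖ ≤ K * exp (K * t) * s * ‖q₁ - q₂‖ := by
  intro s hs
  have hderiv : ∀ σ ∈ Icc 0 s, HasDerivWithinAt (fun σ => ψ σ q₁ - ψ σ q₂)
      (w (ψ σ q₁) - w (ψ σ q₂)) (Icc 0 s) σ :=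
    fun σ _ => ((hψflow q₁ σ).sub (hψflow q₂ σ)).hasDerivWithinAt
  have hbound : ∀ σ ∈ Icc 0 s, ‖w (ψ σ q₁) - w (ψ σ q₂)‖ ≤ K * exp (K * t) * ‖q₁ - q₂‖ := by
    intro σ hσ
    have hσt : σ ∈ Icc 0 t := ⟨hσ.1, hσ.2.trans hs.2⟩
    calc ‖w (ψ σ q₁) - w (ψ σ q₂)‖ ≤ K * ‖ψ σ q₁ - ψ σ q₂‖ :=
          hK.norm_sub_le (flow_mem_closedBall hψ0 hψflow hC h₁ hCt σ hσt)
            (flow_mem_closedBall hψ0 hψflow hC h₂ hCt σ hσt)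
      _ ≤ K * (‖q₁ - q₂‖ * exp (K * t)) := by
          gcongr
          rw [← dist_eq_norm, ← dist_eq_norm]
          exact (dist_flow_le_mul_exp hψ0 hψflow hC hK h₁ h₂ hCt σ hσt).trans
            (by gcongr; exact hσt.2)
      _ = K * exp (K * t) * ‖q₁ - q₂‖ := by ring
  simpa [hψ0, abs_of_nonneg hs.1, mul_right_comm _ s] using
    (convex_Icc 0 s).norm_image_sub_le_of_norm_hasDerivWithin_le hderiv hbound
      (left_mem_Icc.2 hs.1) (right_mem_Icc.2 hs.1)

theorem norm_flow_sub_flow_sub_sub_smul_le (hψ0 : ∀ x, ψ 0 x = x)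
    (hψflow : ∀ x t, HasDerivAt (fun s => ψ s x) (w (ψ t x)) t)
    (hC : ∀ x ∈ closedBall p r, ‖w x‖ < C) {K : ℝ≥0} (hK : LipschitzOnWith K w (closedBall p r))
    {A : E →L[ℝ] E} {ε : ℝ≥0} (hA : LipschitzOnWith ε (fun x => w x - A x) (closedBall p r))
    (h₁ : q₁ ∈ closedBall p (r / 2)) (h₂ : q₂ ∈ closedBall p (r / 2)) (hCt : C * t ≤ r / 2)
    (ht : 0 ≤ t) :
    ‖ψ t q₁ - ψ t q₂ - (q₁ - q₂) - t • (w q₁ - w q₂)‖ ≤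
      (ε * (exp (K * t) + 1) + ‖A‖ * K * exp (K * t) * t) * t * ‖q₁ - q₂‖ := by
  have hderiv : ∀ σ ∈ Icc 0 t, HasDerivWithinAt
      (fun σ => ψ σ q₁ - ψ σ q₂ - (q₁ - q₂) - σ • (w q₁ - w q₂))
      (w (ψ σ q₁) - w (ψ σ q₂) - (w q₁ - w q₂)) (Icc 0 t) σ := fun σ _ => by
    simpa using ((((hψflow q₁ σ).sub (hψflow q₂ σ)).sub_const (q₁ - q₂)).fun_sub
      ((hasDerivAt_id σ).smul_const (w q₁ - w q₂))).hasDerivWithinAt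
  have hbound : ∀ σ ∈ Icc 0 t, ‖w (ψ σ q₁) - w (ψ σ q₂) - (w q₁ - w q₂)‖ ≤
      (ε * (exp (K * t) + 1) + ‖A‖ * K * exp (K * t) * t) * ‖q₁ - q₂‖ := by
    intro σ hσ
    have m₁ := flow_mem_closedBall hψ0 hψflow hC h₁ hCt σ hσ
    have m₂ := flow_mem_closedBall hψ0 hψflow hC h₂ hCt σ hσ
    have hlip : ‖ψ σ q₁ - ψ σ q₂‖ ≤ exp (K * t) * ‖q₁ - q₂‖ := by
      rw [← dist_eq_norm, ← dist_eq_norm, mul_comm]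
      exact (dist_flow_le_mul_exp hψ0 hψflow hC hK h₁ h₂ hCt σ hσ).trans (by gcongr; exact hσ.2)
    have hlin := norm_flow_sub_flow_sub_sub_le hψ0 hψflow hC hK h₁ h₂ hCt σ hσ
    have hφ₁ := hA.norm_sub_le m₁ m₂
    have hr : 0 ≤ r := by linarith [nonempty_closedBall.1 ⟨q₁, h₁⟩]
    have hφ₂ := hA.norm_sub_le (closedBall_subset_closedBall (half_le_self hr) h₁)
      (closedBall_subset_closedBall (half_le_self hr) h₂)
    -- `w - A` is `ε`-Lipschitz near `p`, and `A` only sees the small quantity bounded by `hlin`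
    have hsplit : w (ψ σ q₁) - w (ψ σ q₂) - (w q₁ - w q₂) =
        (w (ψ σ q₁) - A (ψ σ q₁) - (w (ψ σ q₂) - A (ψ σ q₂))) -
          (w q₁ - A q₁ - (w q₂ - A q₂)) + A (ψ σ q₁ - ψ σ q₂ - (q₁ - q₂)) := by
      simp only [map_sub]; abel
    rw [hsplit]
    calc _ ≤ ‖w (ψ σ q₁) - A (ψ σ q₁) - (w (ψ σ q₂) - A (ψ σ q₂))‖ +
          ‖w q₁ - A q₁ - (w q₂ - A q₂)‖ + ‖A‖ * ‖ψ σ q₁ - ψ σ q₂ - (q₁ - q₂)‖ :=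
          (norm_add_le _ _).trans (add_le_add (norm_sub_le _ _) (A.le_opNorm _))
      _ ≤ ε * (exp (K * t) * ‖q₁ - q₂‖) + ε * ‖q₁ - q₂‖ +
          ‖A‖ * (K * exp (K * t) * t * ‖q₁ - q₂‖) := by
          gcongr
          · exact hφ₁.trans (by gcongr)
          · exact hlin.trans (by gcongr; exact hσ.2)
      _ = _ := by ring
  simpa [hψ0, abs_of_nonneg ht, mul_right_comm _ t] using
    (convex_Icc 0 t).norm_image_sub_le_of_norm_hasDerivWithin_le hderiv hbound
      (left_mem_Icc.2 ht) (right_mem_Icc.2 ht)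

theorem ContDiff.exists_lipschitzOnWith_sub_fderiv (hw : ContDiff ℝ 1 w) (p : E) {ε : ℝ≥0}
    (hε : 0 < ε) : ∃ r > 0, (∀ x ∈ closedBall p r, ‖w x‖ < ‖w p‖ + 1) ∧
      LipschitzOnWith ε (fun x => w x - fderiv ℝ w p x) (closedBall p r) := by
  obtain ⟨r, hr, hloc⟩ : ∃ r > 0, ∀ x ∈ closedBall p r,
      ‖w x‖ < ‖w p‖ + 1 ∧ fderiv ℝ w x ∈ closedBall (fderiv ℝ w p) ε :=
    nhds_basis_closedBall.eventually_iff.1 <|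
      (hw.continuous.norm.continuousAt.eventually_lt continuousAt_const (lt_add_one _)).and
        ((hw.continuous_fderiv one_ne_zero).continuousAt.eventually (closedBall_mem_nhds _ hε))
  have hdiff : Differentiable ℝ w := hw.differentiable one_ne_zero
  refine ⟨r, hr, fun x hx => (hloc x hx).1, ?_⟩
  refine (convex_closedBall p r).lipschitzOnWith_of_nnnorm_fderiv_le
    (fun x _ => (hdiff x).sub (fderiv ℝ w p).differentiableAt) fun x hx => ?_
  rw [fderiv_fun_sub (hdiff x) (fderiv ℝ w p).differentiableAt, ContinuousLinearMap.fderiv,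
    ← NNReal.coe_le_coe, coe_nnnorm]
  exact mem_closedBall_iff_norm.1 (hloc x hx).2

theorem hasDerivWithinAt_fderiv_flow_Ici_zero (hw : ContDiff ℝ 1 w) (hψ0 : ∀ x, ψ 0 x = x)
    (hψflow : ∀ x t, HasDerivAt (fun s => ψ s x) (w (ψ t x)) t)
    (hψdiff : ∀ s, DifferentiableAt ℝ (ψ s) p) :
    HasDerivWithinAt (fun s => fderiv ℝ (ψ s) p) (fderiv ℝ w p) (Ici 0) 0 := by
  rw [hasDerivWithinAt_iff_isLittleO, Asymptotics.isLittleO_iff]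
  intro c hc
  obtain ⟨ε, hε⟩ : ∃ ε : ℝ≥0, (ε : ℝ) = c / 4 := ⟨⟨c / 4, by positivity⟩, rfl⟩
  obtain ⟨r, hr, hC, hA⟩ := hw.exists_lipschitzOnWith_sub_fderiv p
    (by rw [← NNReal.coe_pos, hε]; positivity)
  set A := fderiv ℝ w p
  have hK : LipschitzOnWith (ε + ‖A‖₊) w (closedBall p r) := by
    simpa using hA.add A.lipschitz.lipschitzOnWith
  let bound s := ε * (exp ((ε + ‖A‖₊ : ℝ≥0) * s) + 1) +
    ‖A‖ * (ε + ‖A‖₊ : ℝ≥0) * exp ((ε + ‖A‖₊ : ℝ≥0) * s) * s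
  have hbound : ∀ᶠ s in 𝓝 0, bound s < c :=
    (by fun_prop : Continuous bound).continuousAt.eventually_lt continuousAt_const
      (by norm_num [bound, hε]; linarith)
  have hshort : ∀ᶠ s in 𝓝 (0 : ℝ), (‖w p‖ + 1) * s < r / 2 :=
    (by fun_prop : Continuous fun s : ℝ => (‖w p‖ + 1) * s).continuousAt.eventually_lt
      continuousAt_const (by simpa using half_pos hr)
  have hfderiv0 : fderiv ℝ (ψ 0) p = ContinuousLinearMap.id ℝ E := by
    rw [show ψ 0 = id from funext hψ0, fderiv_id]
  filter_upwards [self_mem_nhdsWithin, nhdsWithin_le_nhds hbound, nhdsWithin_le_nhds hshort]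
    with s (hs : 0 ≤ s) hbs hCs
  rw [hfderiv0, sub_zero, Real.norm_eq_abs, abs_of_nonneg hs]
  have hgap : HasFDerivAt (fun x => ψ s x - x - s • w x)
      (fderiv ℝ (ψ s) p - ContinuousLinearMap.id ℝ E - s • A) p :=
    ((hψdiff s).hasFDerivAt.sub (hasFDerivAt_id p)).sub
      ((hw.differentiable one_ne_zero p).hasFDerivAt.const_smul s)
  refine hgap.le_of_lip' (by positivity) ?_
  filter_upwards [closedBall_mem_nhds p (half_pos hr)] with x hx
  calc ‖ψ s x - x - s • w x - (ψ s p - p - s • w p)‖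
      = ‖ψ s x - ψ s p - (x - p) - s • (w x - w p)‖ := by congr 1; rw [smul_sub]; abel
    _ ≤ bound s * s * ‖x - p‖ :=
      norm_flow_sub_flow_sub_sub_smul_le hψ0 hψflow hC hK hA hx
        (mem_closedBall_self (half_pos hr).le) hCs.le hs
    _ ≤ c * s * ‖x - p‖ := by gcongr

theorem hasDerivAt_fderiv_flow_zero (hw : ContDiff ℝ 1 w) (hψ0 : ∀ x, ψ 0 x = x)
    (hψflow : ∀ x t, HasDerivAt (fun s => ψ s x) (w (ψ t x)) t)
    (hψdiff : ∀ s, DifferentiableAt ℝ (ψ s) p) :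
    HasDerivAt (fun s => fderiv ℝ (ψ s) p) (fderiv ℝ w p) 0 := by
  have right := hasDerivWithinAt_fderiv_flow_Ici_zero hw hψ0 hψflow hψdiff
  have reversed := hasDerivWithinAt_fderiv_flow_Ici_zero (ψ := fun s => ψ (-s)) hw.neg
    (by simpa using hψ0)
    (fun x t => by simpa [Function.comp_def] using (hψflow x (-t)).scomp t (hasDerivAt_neg t))
    (fun s => hψdiff (-s))
  have left : HasDerivWithinAt (fun s => fderiv ℝ (ψ s) p) (fderiv ℝ w p) (Iic 0) 0 := by
    have := reversed.scomp_of_eq 0 (hasDerivAt_neg 0).hasDerivWithinAt (s := Iic 0)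
      (fun x (hx : x ≤ 0) => neg_nonneg.2 hx) neg_zero.symm
    rw [fderiv_fun_neg, neg_smul, one_smul, neg_neg] at this
    simpa only [Function.comp_def, neg_neg] using this
  simpa using left.union right

theorem hasDerivAt_fderiv_flow (hw : ContDiff ℝ 1 w) (hψ0 : ∀ x, ψ 0 x = x)
    (hψadd : ∀ s t x, ψ (s + t) x = ψ s (ψ t x))
    (hψflow : ∀ x t, HasDerivAt (fun s => ψ s x) (w (ψ t x)) t)
    (hψdiff : ∀ s, Differentiable ℝ (ψ s)) (y : E) (t : ℝ) :
    HasDerivAt (fun s => fderiv ℝ (ψ s) y) ((fderiv ℝ w (ψ t y)).comp (fderiv ℝ (ψ t) y)) t := by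
  have hsplit : (fun s => fderiv ℝ (ψ s) y) =
      fun s => (fderiv ℝ (ψ (s - t)) (ψ t y)).comp (fderiv ℝ (ψ t) y) := by
    funext s
    rw [← fderiv_comp y (hψdiff _ _) (hψdiff _ _)]
    congr 1
    funext x
    simp [← hψadd]
  have h0 := HasDerivAt.comp_sub_const t t <| (sub_self t).symm ▸
    hasDerivAt_fderiv_flow_zero hw hψ0 hψflow fun s => hψdiff s (ψ t y)
  rw [hsplit]
  simpa using h0.clm_comp (hasDerivAt_const t (fderiv ℝ (ψ t) y))

theorem ODE_solution_unique_univ_of_linear {A : ℝ → E →L[ℝ] E} (hA : Continuous A)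
    {f g : ℝ → E} (hf : ∀ t, HasDerivAt f (A t (f t)) t) (hg : ∀ t, HasDerivAt g (A t (g t)) t)
    {t₀ : ℝ} (h : f t₀ = g t₀) : f = g := by
  funext t
  obtain ⟨a, b, ht, ht₀⟩ : ∃ a b, t ∈ Ioo a b ∧ t₀ ∈ Ioo a b :=
    ⟨min t t₀ - 1, max t t₀ + 1, by grind⟩
  obtain ⟨K, hK⟩ := (isCompact_Icc (a := a) (b := b)).exists_bound_of_continuousOn hA.continuousOn
  refine ODE_solution_unique_of_mem_Ioo (K := K.toNNReal) (s := fun _ => univ)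
    (fun s hs => ((A s).lipschitz.weaken ?_).lipschitzOnWith) ht₀ (fun s _ => ⟨hf s, trivial⟩)
    (fun s _ => ⟨hg s, trivial⟩) h ht
  rw [← NNReal.coe_le_coe, coe_nnnorm, Real.coe_toNNReal']
  exact le_max_of_le_left (hK s (Ioo_subset_Icc_self hs))

theorem fderiv_flow_apply_eq {v : E → E} (hv : Differentiable ℝ v) (hw : ContDiff ℝ 1 w)
    (hbracket : ∀ x, fderiv ℝ w x (v x) - fderiv ℝ v x (w x) = 0)
    (hψ0 : ∀ x, ψ 0 x = x) (hψadd : ∀ s t x, ψ (s + t) x = ψ s (ψ t x))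
    (hψflow : ∀ x t, HasDerivAt (fun s => ψ s x) (w (ψ t x)) t)
    (hψdiff : ∀ s, Differentiable ℝ (ψ s)) (t : ℝ) (y : E) :
    fderiv ℝ (ψ t) y (v y) = v (ψ t y) := by
  have hcurve : Continuous fun s => ψ s y :=
    continuous_iff_continuousAt.2 fun s => (hψflow y s).continuousAt
  refine congrFun (ODE_solution_unique_univ_of_linear (t₀ := 0)
    (f := fun s => fderiv ℝ (ψ s) y (v y)) (g := fun s => v (ψ s y))
    ((hw.continuous_fderiv one_ne_zero).comp hcurve) (fun s => ?_) (fun s => ?_) ?_) t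
  · simpa using (hasDerivAt_fderiv_flow hw hψ0 hψadd hψflow hψdiff y s).clm_apply
      (hasDerivAt_const s (v y))
  · rw [Function.comp_apply, sub_eq_zero.1 (hbracket _)]
    exact (hv _).hasFDerivAt.comp_hasDerivAt s (hψflow y s)
  · simp [show ψ 0 = id from funext hψ0, hψ0]

end

/-- If `[v, w] = 0` then the flow of `w` is a symmetry group of
`ẋ = v(x)`: it maps solutions to solutions. -/
theorem commuting_flow_is_symmetry
    {m : ℕ} (v w : (Fin m → ℝ) → (Fin m → ℝ))
    (hv : ContDiff ℝ 1 v) (hw : ContDiff ℝ 1 w)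
    (hbracket : ∀ x : Fin m → ℝ, fderiv ℝ w x (v x) - fderiv ℝ v x (w x) = 0)
    (ψ : ℝ → (Fin m → ℝ) → (Fin m → ℝ))
    (hψ0 : ∀ x, ψ 0 x = x)
    (hψadd : ∀ s t x, ψ (s + t) x = ψ s (ψ t x))
    (hψflow : ∀ x t, HasDerivAt (fun s => ψ s x) (w (ψ t x)) t)
    (hψsmooth : ∀ ε : ℝ, ContDiff ℝ 1 (ψ ε)) :
    ∀ (ε : ℝ) (γ : ℝ → (Fin m → ℝ)), (∀ t : ℝ, HasDerivAt γ (v (γ t)) t) →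
      ∀ t : ℝ, HasDerivAt (fun s => ψ ε (γ s)) (v (ψ ε (γ t))) t := by
  intro ε γ hγ t
  have hψdiff : ∀ s, Differentiable ℝ (ψ s) := fun s => (hψsmooth s).differentiable one_ne_zero
  rw [← fderiv_flow_apply_eq (hv.differentiable one_ne_zero) hw hbracket hψ0 hψadd hψflow hψdiff]
  exact (hψdiff ε (γ t)).hasFDerivAt.comp_hasDerivAt t (hγ t)
end

section
/- Let A be a real m×m matrix, let x : I → ℝ^m be a differentiable solution of ẋ = A x on an interval I, fix an index j, and assume x_j(t) ≠ 0 for all t ∈ I. Then the normalized vector u(t) = x(t)/x_j(t) is differentiable on I and satisfies u'(t) = A u(t) − (A u(t))_j · u(t), an equation whose right-hand side depends only on u. Hence the projection onto the ratios x_i/x_j induces a well-defined dynamics on the real projective space. -/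
/-! Dehomogenising by a linear functional `φ` that does not vanish on the curve, the quotient
rule gives `(f / φ f)' = v - φ v • u` with `u = f / φ f` and `v = f' / φ f`. For `f' = A f`
linearity gives `v = A u`, so the right-hand side is a function of `u` alone. -/

theorem HasDerivAt.inv_clm_apply_smul {𝕜 E : Type*} [NontriviallyNormedField 𝕜]
    [NormedAddCommGroup E] [NormedSpace 𝕜 E] {f : 𝕜 → E} {f' : E} {t : 𝕜} (φ : E →L[𝕜] 𝕜)
    (hf : HasDerivAt f f' t) (hφ : φ (f t) ≠ 0) :
    HasDerivAt (fun s => (φ (f s))⁻¹ • f s)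
      ((φ (f t))⁻¹ • f' - φ ((φ (f t))⁻¹ • f') • (φ (f t))⁻¹ • f t) t := by
  have hφf : HasDerivAt (fun s => φ (f s)) (φ f') t := φ.hasFDerivAt.comp_hasDerivAt t hf
  refine ((hφf.inv hφ).smul hf).congr_deriv ?_
  rw [map_smul, smul_eq_mul, smul_smul]
  module

/-- For a solution of `ẋ = A x` with `x_j(t) ≠ 0` on `I`, the
normalized vector `u = x / x_j` satisfies `u' = A u − (A u)_j • u`; the projection
onto `x_i/x_j` induces a well-defined dynamics on projective space. -/
theorem projective_space_dynamics
    {m : ℕ} (A : Matrix (Fin m) (Fin m) ℝ) (I : Set ℝ) (x : ℝ → (Fin m → ℝ))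
    (j : Fin m)
    (hx : ∀ t ∈ I, HasDerivAt x (A.mulVec (x t)) t)
    (hxj : ∀ t ∈ I, x t j ≠ 0) :
    ∀ t ∈ I, HasDerivAt (fun s => (x s j)⁻¹ • x s)
      (A.mulVec ((x t j)⁻¹ • x t)
        - A.mulVec ((x t j)⁻¹ • x t) j • ((x t j)⁻¹ • x t)) t := by
  intro t ht
  rw [Matrix.mulVec_smul]
  exact (hx t ht).inv_clm_apply_smul (ContinuousLinearMap.proj j) (hxj t ht)
end
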